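/- arXiv:1809.06761 — 3 statements merged into one kernel-verified Lean document; each statement's English description precedes it below -/
import Mathlib

section
/- Let ⊢ be a logic with r-partition function ∗, and let ⟨A, F⟩ be a model of the containment companion ⊢^r such that the interpretation · of the term ∗ in A is a partition function on A. Then every ≈-class meeting F, equipped with the restriction of F, is a model of ⊢: for every c ∈ F and every evaluation h into A such that h(x) ≈ c for every variable x, if Γ ⊢ φ and h[Γ] ⊆ F, then h(φ) ∈ F. -/
open FirstOrder FirstOrder.Language

variable {L : FirstOrder.Language.{0, 0}}

/-- The set of variables occurring in a formula (term). -/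
def Tvar (φ : L.Term ℕ) : Set ℕ := {x | x ∈ φ.varFinset}

/-- The set of variables occurring in a set of formulas. -/
def SVar (Γ : Set (L.Term ℕ)) : Set ℕ := ⋃ γ ∈ Γ, Tvar γ

/-- The image of a set of formulas under a substitution. -/
def SubstImg (σ : ℕ → L.Term ℕ) (Γ : Set (L.Term ℕ)) : Set (L.Term ℕ) :=
  (fun ψ => ψ.subst σ) '' Γ

/-- A logic: a substitution-invariant consequence relation on formulas. -/
structure ConsLogic (L : FirstOrder.Language.{0, 0}) where
  deriv : Set (L.Term ℕ) → L.Term ℕ → Prop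
  refl : ∀ Γ φ, φ ∈ Γ → deriv Γ φ
  mono : ∀ Γ Δ φ, Γ ⊆ Δ → deriv Γ φ → deriv Δ φ
  cut : ∀ Γ Δ φ, (∀ δ ∈ Δ, deriv Γ δ) → deriv (Γ ∪ Δ) φ → deriv Γ φ
  substInv : ∀ Γ φ (σ : ℕ → L.Term ℕ), deriv Γ φ → deriv (SubstImg σ Γ) (φ.subst σ)

/-- A consequence relation is finitary. -/
def FinitaryRel (R : Set (L.Term ℕ) → L.Term ℕ → Prop) : Prop :=
  ∀ Γ φ, R Γ φ → ∃ Δ : Finset (L.Term ℕ), ↑Δ ⊆ Γ ∧ R ↑Δ φ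

/-- Σ is an antitheorem of the consequence relation `R`. -/
def IsAntitheorem (R : Set (L.Term ℕ) → L.Term ℕ → Prop) (S : Set (L.Term ℕ)) : Prop :=
  ∀ (σ : ℕ → L.Term ℕ) (φ : L.Term ℕ), R (SubstImg σ S) φ

/-- The containment companion of a logic. -/
def CC (V : ConsLogic L) (Γ : Set (L.Term ℕ)) (φ : L.Term ℕ) : Prop :=
  (V.deriv Γ φ ∧ Tvar φ ⊆ SVar Γ) ∨ ∃ S, IsAntitheorem V.deriv S ∧ S ⊆ Γ

/-- The matrix ⟨A, F⟩ is a model of the consequence relation `R`. -/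
def IsMatrixModel (R : Set (L.Term ℕ) → L.Term ℕ → Prop) (A : Type) [L.Structure A]
    (F : Set A) : Prop :=
  ∀ Γ φ, R Γ φ → ∀ h : ℕ → A, (∀ γ ∈ Γ, Term.realize h γ ∈ F) → Term.realize h φ ∈ F

/-- An isomorphism of matrices: an isomorphism of the underlying algebras mapping the
filter exactly onto the filter. -/
def MatrixIso (A : Type) [L.Structure A] (F : Set A) (B : Type) [L.Structure B]
    (G : Set B) : Prop :=
  ∃ e : L.Equiv A B, ∀ a, a ∈ F ↔ e a ∈ G

/-- The one-element structure. -/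
def punitStruct : L.Structure PUnit where
  funMap _ _ := PUnit.unit
  RelMap _ _ := False

/-- An r-direct system of matrices over the join-semilattice `I`. -/
structure RDirectSystem (L : FirstOrder.Language.{0, 0}) (I : Type) [SemilatticeSup I] where
  A : I → Type
  str : ∀ i, L.Structure (A i)
  F : ∀ i, Set (A i)
  f : ∀ i j, i ≤ j → A i → A j
  f_hom : ∀ i j (h : i ≤ j) (n : ℕ) (g : L.Functions n) (as : Fin n → A i),
    f i j h (@Structure.funMap L (A i) (str i) n g as) =
      @Structure.funMap L (A j) (str j) n g (fun k => f i j h (as k))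
  f_id : ∀ i (a : A i), f i i le_rfl a = a
  f_comp : ∀ i j k (hij : i ≤ j) (hjk : j ≤ k) (a : A i),
    f j k hjk (f i j hij a) = f i k (hij.trans hjk) a
  plus_sup : ∀ i j, (F i).Nonempty → (F j).Nonempty → (F (i ⊔ j)).Nonempty
  f_filter : ∀ i j (h : i ≤ j), (F j).Nonempty → f i j h ⁻¹' F j = F i

/-- The Płonka sum structure over an r-direct system (the language has no constants). -/
def RDirectSystem.plonkaStr {I : Type} [SemilatticeSup I] (S : RDirectSystem L I)
    [IsEmpty (L.Functions 0)] : L.Structure (Σ i, S.A i) where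
  funMap {n} g as :=
    match n, g, as with
    | 0, g, _ => isEmptyElim g
    | (m + 1), g, as =>
      ⟨Finset.univ.sup' Finset.univ_nonempty fun k => (as k).1,
        @Structure.funMap L _ (S.str _) _ g fun k =>
          S.f (as k).1 _ (Finset.le_sup' (fun k => (as k).1) (Finset.mem_univ k)) (as k).2⟩
  RelMap _ _ := False

/-- The filter of the Płonka sum of an r-direct system of matrices. -/
def RDirectSystem.filter {I : Type} [SemilatticeSup I] (S : RDirectSystem L I) :
    Set (Σ i, S.A i) := {a | a.2 ∈ S.F a.1}


/-- The application `t ∗ u` of the binary term `s` to formulas `t` and `u`. -/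
def starT (s : L.Term (Fin 2)) (t u : L.Term ℕ) : L.Term ℕ := s.subst ![t, u]

/-- The result `χ(t, z̄)` of substituting the formula `t` for the variable `v` in `χ`. -/
def substVar (χ : L.Term ℕ) (v : ℕ) (t : L.Term ℕ) : L.Term ℕ :=
  χ.subst (fun m => if m = v then t else Term.var m)

/-- `(ε, δ)` is an instance of one of the partition-function identities P1–P5,
read as term identities for `∗`. -/
def IsPIdentInstance (s : L.Term (Fin 2)) (ε δ : L.Term ℕ) : Prop :=
  (∃ a, ε = starT s a a ∧ δ = a) ∨
  (∃ a b c, ε = starT s a (starT s b c) ∧ δ = starT s (starT s a b) c) ∨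
  (∃ a b c, ε = starT s a (starT s b c) ∧ δ = starT s a (starT s c b)) ∨
  (∃ (n : ℕ) (g : L.Functions (n + 1)) (as : Fin (n + 1) → L.Term ℕ) (b : L.Term ℕ),
    ε = starT s (Term.func g as) b ∧ δ = Term.func g (fun k => starT s (as k) b)) ∨
  (∃ (n : ℕ) (g : L.Functions (n + 1)) (as : Fin (n + 1) → L.Term ℕ) (b : L.Term ℕ),
    ε = starT s b (Term.func g as) ∧ δ = (List.ofFn as).foldl (starT s) b)

/-- The consequence relation `R` has `s` as an r-partition function. -/
def HasRPartitionFunction (R : Set (L.Term ℕ) → L.Term ℕ → Prop) (s : L.Term (Fin 2)) :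
    Prop :=
  (∀ i : Fin 2, i ∈ s.varFinset) ∧
  R {Term.var 0, Term.var 1} (starT s (Term.var 0) (Term.var 1)) ∧
  R {starT s (Term.var 0) (Term.var 1)} (Term.var 0) ∧
  ∀ ε δ, IsPIdentInstance s ε δ → ∀ (χ : L.Term ℕ) (v : ℕ),
    R {substVar χ v ε} (substVar χ v δ) ∧ R {substVar χ v δ} (substVar χ v ε)

/-- The interpretation of the binary term `s` in the structure `A`. -/
def dotOf (A : Type) [L.Structure A] (s : L.Term (Fin 2)) : A → A → A :=
  fun a b => Term.realize ![a, b] s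

/-- A binary operation on an `L`-structure is a partition function. -/
def IsPartitionFunction (A : Type) [L.Structure A] (d : A → A → A) : Prop :=
  (∀ a, d a a = a) ∧
  (∀ a b c, d a (d b c) = d (d a b) c) ∧
  (∀ a b c, d a (d b c) = d a (d c b)) ∧
  (∀ (n : ℕ) (g : L.Functions (n + 1)) (as : Fin (n + 1) → A) (b : A),
    d (Structure.funMap g as) b = Structure.funMap g (fun k => d (as k) b)) ∧
  (∀ (n : ℕ) (g : L.Functions (n + 1)) (as : Fin (n + 1) → A) (b : A),
    d b (Structure.funMap g as) = (List.ofFn as).foldl d b)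

/-- The equivalence relation `a ≈ b` induced by a partition function. -/
def PApprox {A : Type} (d : A → A → A) (a b : A) : Prop := d a b = a ∧ d b a = b

/-!
The `≈`-class of `c` is closed under the operations (by P4, P5 and the absence of constants),
and on it `a · b = a` (by P2). Given `Γ ⊢ φ`, pick an anchor `w` with `h(w) ∈ F` and
`h(w) · h(x) = h(w)` for all `x`. Then `Γ ∪ {w ∗ x : x ∈ Var φ} ⊢^r φ`, because the second
variable of `∗` occurs in it, and `h` sends every `w ∗ x` to `h(w) ∈ F`. The anchor is a member
of `Γ`, or, when `Γ = ∅`, a variable not in `φ` re-evaluated to `c`.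
-/

namespace FirstOrder.Language.Term

theorem realize_congr_of_varFinset {A α : Type} [L.Structure A] [DecidableEq α]
    (t : L.Term α) {v v' : α → A} (hv : ∀ x ∈ t.varFinset, v x = v' x) :
    t.realize v = t.realize v' := by
  induction t with
  | var x => exact hv x (Finset.mem_singleton_self x)
  | func g ts ih =>
    simp only [Term.realize]
    congr 1
    funext i
    exact ih i fun x hx => hv x (Finset.mem_biUnion.2 ⟨i, Finset.mem_univ i, hx⟩)

theorem mem_varFinset_subst {α β : Type} [DecidableEq α] [DecidableEq β]
    {t : L.Term α} (σ : α → L.Term β) {i : α} (hi : i ∈ t.varFinset)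
    {x : β} (hx : x ∈ (σ i).varFinset) : x ∈ (t.subst σ).varFinset := by
  induction t with
  | var j =>
    rw [Term.varFinset, Finset.mem_singleton] at hi
    subst hi
    exact hx
  | func g ts ih =>
    obtain ⟨k, -, hk⟩ := Finset.mem_biUnion.1 hi
    exact Finset.mem_biUnion.2 ⟨k, Finset.mem_univ k, ih k hk⟩

end FirstOrder.Language.Term

theorem List.foldl_eq_self_of_forall_mem {α β : Type} {f : α → β → α} {a : α} :
    ∀ {l : List β}, (∀ b ∈ l, f a b = a) → l.foldl f a = a
  | [], _ => rfl
  | b :: l, hl => by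
    rw [List.foldl_cons, hl b List.mem_cons_self]
    exact List.foldl_eq_self_of_forall_mem fun b' hb' => hl b' (List.mem_cons_of_mem b hb')

theorem mem_varFinset_starT {s : L.Term (Fin 2)} (hs : (1 : Fin 2) ∈ s.varFinset)
    (t : L.Term ℕ) (x : ℕ) : x ∈ (starT s t (Term.var x)).varFinset :=
  Term.mem_varFinset_subst _ hs (Finset.mem_singleton_self x)

section PartitionFunction

variable {A : Type} [L.Structure A] {s : L.Term (Fin 2)}

theorem realize_starT (t u : L.Term ℕ) (h : ℕ → A) :
    (starT s t u).realize h = dotOf A s (t.realize h) (u.realize h) := by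
  simp only [starT, dotOf, Term.realize_subst]
  congr 1
  funext i
  fin_cases i <;> rfl

theorem IsPartitionFunction.dotOf_eq_left_of_papprox
    (hpart : IsPartitionFunction (L := L) A (dotOf A s)) {a b c : A}
    (hac : PApprox (dotOf A s) a c) (hbc : PApprox (dotOf A s) b c) :
    dotOf A s a b = a :=
  calc dotOf A s a b = dotOf A s (dotOf A s a c) b := by rw [hac.1]
    _ = dotOf A s a (dotOf A s c b) := (hpart.2.1 a c b).symm
    _ = a := by rw [hbc.2, hac.1]

theorem IsPartitionFunction.papprox_funMap
    (hpart : IsPartitionFunction (L := L) A (dotOf A s)) {c : A} {n : ℕ}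
    (g : L.Functions (n + 1)) {as : Fin (n + 1) → A}
    (has : ∀ k, PApprox (dotOf A s) (as k) c) :
    PApprox (dotOf A s) (Structure.funMap g as) c := by
  obtain ⟨-, -, -, P4, P5⟩ := hpart
  refine ⟨?_, ?_⟩
  · rw [P4]
    exact congrArg _ (funext fun k => (has k).1)
  · rw [P5]
    refine List.foldl_eq_self_of_forall_mem fun e he => ?_
    obtain ⟨k, rfl⟩ := List.mem_ofFn.1 he
    exact (has k).2

theorem IsPartitionFunction.papprox_realize [IsEmpty (L.Functions 0)]
    (hpart : IsPartitionFunction (L := L) A (dotOf A s)) {c : A} {h : ℕ → A}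
    (hh : ∀ x, PApprox (dotOf A s) (h x) c) (t : L.Term ℕ) :
    PApprox (dotOf A s) (t.realize h) c := by
  induction t with
  | var x => exact hh x
  | @func n g ts ih =>
    cases n with
    | zero => exact isEmptyElim g
    | succ n => exact hpart.papprox_funMap g ih

end PartitionFunction

theorem IsMatrixModel.realize_mem_of_deriv_of_absorbing {V : ConsLogic L}
    {s : L.Term (Fin 2)} (hs : (1 : Fin 2) ∈ s.varFinset) {A : Type} [L.Structure A]
    {F : Set A} (hmod : IsMatrixModel (CC V) A F) {Γ : Set (L.Term ℕ)} {φ : L.Term ℕ}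
    (hΓφ : V.deriv Γ φ) {h : ℕ → A} (hΓF : ∀ γ ∈ Γ, γ.realize h ∈ F)
    (w : L.Term ℕ) (hw : w.realize h ∈ F)
    (habs : ∀ x, dotOf A s (w.realize h) (h x) = w.realize h) :
    φ.realize h ∈ F := by
  set Γ' := Γ ∪ (fun x => starT s w (Term.var x)) '' Tvar φ
  have hcc : CC V Γ' φ := Or.inl
    ⟨V.mono Γ Γ' φ Set.subset_union_left hΓφ, fun x hx =>
      Set.mem_biUnion (Set.mem_union_right _ (Set.mem_image_of_mem _ hx))
        (mem_varFinset_starT hs w x)⟩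
  refine hmod Γ' φ hcc h ?_
  rintro γ (hγ | ⟨x, -, rfl⟩)
  · exact hΓF γ hγ
  · rw [realize_starT, Term.realize_var, habs]
    exact hw

/-- Let `⊢` be a logic with r-partition function `∗`, and `⟨A, F⟩` a
model of the containment companion `⊢^r` such that the interpretation `·` of `∗` in `A`
is a partition function.  Then every `≈`-class meeting `F`, equipped with the restriction
of `F`, is a model of `⊢`: for every `c ∈ F` and every evaluation `h` taking values in the
`≈`-class of `c`, if `Γ ⊢ φ` and `h[Γ] ⊆ F`, then `h(φ) ∈ F`. -/
theorem statement_4 (L : FirstOrder.Language.{0, 0}) [IsEmpty (L.Functions 0)]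
    (V : ConsLogic L) (s : L.Term (Fin 2))
    (hpf : HasRPartitionFunction V.deriv s)
    (A : Type) [L.Structure A] (F : Set A)
    (hmod : IsMatrixModel (CC V) A F)
    (hpart : IsPartitionFunction (L := L) A (dotOf A s)) :
    ∀ c ∈ F, ∀ h : ℕ → A, (∀ x : ℕ, PApprox (dotOf A s) (h x) c) →
      ∀ (Γ : Set (L.Term ℕ)) (φ : L.Term ℕ), V.deriv Γ φ →
        (∀ γ ∈ Γ, Term.realize h γ ∈ F) → Term.realize h φ ∈ F := by
  intro c hc h hh Γ φ hΓφ hΓF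
  rcases Set.eq_empty_or_nonempty Γ with rfl | ⟨γ, hγ⟩
  · obtain ⟨z, hz⟩ := Infinite.exists_notMem_finset φ.varFinset
    have hφ : φ.realize (Function.update h z c) = φ.realize h :=
      φ.realize_congr_of_varFinset fun x hx =>
        Function.update_of_ne (ne_of_mem_of_not_mem hx hz) c h
    rw [← hφ]
    refine hmod.realize_mem_of_deriv_of_absorbing (hpf.1 1) hΓφ (by simp) (Term.var z)
      (by simpa using hc) fun x => ?_
    rcases eq_or_ne x z with rfl | hxz
    · simpa using hpart.1 c
    · simpa [Function.update_of_ne hxz] using (hh x).2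
  · exact hmod.realize_mem_of_deriv_of_absorbing (hpf.1 1) hΓφ hΓF γ (hΓF γ hγ) fun x =>
      hpart.dotOf_eq_left_of_papprox (hpart.papprox_realize hh γ) (hh x)
end

section
/- If ⊢ is a logic, then its containment companion ⊢^r is a consequence relation: it is reflexive (φ ∈ Γ implies Γ ⊢^r φ), monotone (Γ ⊆ Δ and Γ ⊢^r φ imply Δ ⊢^r φ), and satisfies cut (if Γ ⊢^r δ for all δ ∈ Δ and Γ ∪ Δ ⊢^r φ, then Γ ⊢^r φ). -/
open FirstOrder FirstOrder.Language

variable {L : FirstOrder.Language.{0, 0}}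

/-! A set of premises that derives every member of an antitheorem is itself an antitheorem
(substitute, then cut); so in the cut rule an antitheorem inside `Γ ∪ Δ` makes `Γ` one. Otherwise
no antitheorem lies in `Γ`, every `δ ∈ Δ` is a plain consequence of `Γ` whose variables occur in
`Γ`, and cut for `⊢` together with `Var(Γ ∪ Δ) ⊆ Var(Γ)` gives `Γ ⊢^r φ`. -/

theorem Tvar_subset_SVar {Γ : Set (L.Term ℕ)} {φ : L.Term ℕ} (hφ : φ ∈ Γ) :
    Tvar φ ⊆ SVar Γ :=
  Set.subset_biUnion_of_mem hφ

theorem SVar_mono {Γ Δ : Set (L.Term ℕ)} (h : Γ ⊆ Δ) : SVar Γ ⊆ SVar Δ :=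
  Set.biUnion_subset_biUnion_left h

theorem SVar_union_subset_left {Γ Δ : Set (L.Term ℕ)} (hΔ : ∀ δ ∈ Δ, Tvar δ ⊆ SVar Γ) :
    SVar (Γ ∪ Δ) ⊆ SVar Γ :=
  Set.iUnion₂_subset fun _ hψ => hψ.elim Tvar_subset_SVar (hΔ _)

namespace ConsLogic

variable (V : ConsLogic L)

theorem isAntitheorem_of_derives {Γ S : Set (L.Term ℕ)} (hS : IsAntitheorem V.deriv S)
    (hΓS : ∀ s ∈ S, V.deriv Γ s) : IsAntitheorem V.deriv Γ := by
  intro σ χ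
  refine V.cut _ (SubstImg σ S) χ ?_ (V.mono _ _ χ Set.subset_union_right (hS σ χ))
  rintro _ ⟨s, hs, rfl⟩
  exact V.substInv Γ s σ (hΓS s hs)

end ConsLogic

namespace CC

variable {V : ConsLogic L}

theorem of_mem {Γ : Set (L.Term ℕ)} {φ : L.Term ℕ} (hφ : φ ∈ Γ) : CC V Γ φ :=
  Or.inl ⟨V.refl Γ φ hφ, Tvar_subset_SVar hφ⟩

theorem mono {Γ Δ : Set (L.Term ℕ)} {φ : L.Term ℕ} (hΓΔ : Γ ⊆ Δ) (h : CC V Γ φ) : CC V Δ φ := by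
  rcases h with ⟨hφ, hvars⟩ | ⟨S, hS, hSΓ⟩
  · exact Or.inl ⟨V.mono Γ Δ φ hΓΔ hφ, hvars.trans (SVar_mono hΓΔ)⟩
  · exact Or.inr ⟨S, hS, hSΓ.trans hΓΔ⟩

theorem cut {Γ Δ : Set (L.Term ℕ)} {φ : L.Term ℕ} (hΔ : ∀ δ ∈ Δ, CC V Γ δ)
    (h : CC V (Γ ∪ Δ) φ) : CC V Γ φ := by
  by_cases hΓ : ∃ S, IsAntitheorem V.deriv S ∧ S ⊆ Γ
  · exact Or.inr hΓ
  have hΔ' : ∀ δ ∈ Δ, V.deriv Γ δ ∧ Tvar δ ⊆ SVar Γ :=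
    fun δ hδ => (hΔ δ hδ).resolve_right hΓ
  rcases h with ⟨hφ, hvars⟩ | ⟨S, hS, hSΓΔ⟩
  · exact Or.inl ⟨V.cut Γ Δ φ (fun δ hδ => (hΔ' δ hδ).1) hφ,
      hvars.trans (SVar_union_subset_left fun δ hδ => (hΔ' δ hδ).2)⟩
  · have hΓΔ : ∀ ψ ∈ Γ ∪ Δ, V.deriv Γ ψ :=
      fun ψ hψ => hψ.elim (V.refl Γ ψ) fun hψΔ => (hΔ' ψ hψΔ).1
    exact Or.inr ⟨Γ, V.isAntitheorem_of_derives hS fun s hs => hΓΔ s (hSΓΔ hs), subset_rfl⟩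

end CC

theorem statement_8_general (L : FirstOrder.Language.{0, 0})
    (V : ConsLogic L) :
    (∀ (Γ : Set (L.Term ℕ)) (φ : L.Term ℕ), φ ∈ Γ → CC V Γ φ) ∧
    (∀ (Γ Δ : Set (L.Term ℕ)) (φ : L.Term ℕ), Γ ⊆ Δ → CC V Γ φ → CC V Δ φ) ∧
    (∀ (Γ Δ : Set (L.Term ℕ)) (φ : L.Term ℕ),
      (∀ δ ∈ Δ, CC V Γ δ) → CC V (Γ ∪ Δ) φ → CC V Γ φ) :=
  ⟨fun _ _ => CC.of_mem, fun _ _ _ => CC.mono, fun _ _ _ => CC.cut⟩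

/-- If `⊢` is a logic, then its containment companion `⊢^r` is a
consequence relation: reflexive, monotone and satisfying cut. -/
theorem statement_8 (L : FirstOrder.Language.{0, 0}) [IsEmpty (L.Functions 0)]
    (V : ConsLogic L) :
    (∀ (Γ : Set (L.Term ℕ)) (φ : L.Term ℕ), φ ∈ Γ → CC V Γ φ) ∧
    (∀ (Γ Δ : Set (L.Term ℕ)) (φ : L.Term ℕ), Γ ⊆ Δ → CC V Γ φ → CC V Δ φ) ∧
    (∀ (Γ Δ : Set (L.Term ℕ)) (φ : L.Term ℕ),
      (∀ δ ∈ Δ, CC V Γ δ) → CC V (Γ ∪ Δ) φ → CC V Γ φ) :=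
  statement_8_general L V
end

section
/- If ⊢ is a logic, then ⊢ and its containment companion ⊢^r have the same antitheorems: a set Σ of formulas is an antitheorem of ⊢^r if and only if it is an antitheorem of ⊢. -/
/-!
`⊢^r` is contained in `⊢`: an antitheorem derives everything already under the identity
substitution, so any set including one `⊢`-derives everything. Conversely, the antitheorems of
`⊢` are closed under substitution, so each `σ[Σ]` includes an antitheorem of `⊢` and therefore
`⊢^r`-derives everything.
-/

open FirstOrder FirstOrder.Language

variable {L : FirstOrder.Language.{0, 0}}

namespace FirstOrder.Language.Term

variable {α β γ : Type*}

@[simp]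
lemma subst_var (t : L.Term α) : t.subst var = t := by
  induction t with
  | var => rfl
  | func g as ih => simp [subst, ih]

lemma subst_subst (t : L.Term α) (σ : α → L.Term β) (τ : β → L.Term γ) :
    (t.subst σ).subst τ = t.subst (fun x => (σ x).subst τ) := by
  induction t with
  | var => rfl
  | func g as ih => simp [subst, ih]

end FirstOrder.Language.Term

@[simp]
lemma substImg_var (Γ : Set (L.Term ℕ)) : SubstImg Term.var Γ = Γ := by
  simp [SubstImg]

lemma substImg_substImg (σ τ : ℕ → L.Term ℕ) (Γ : Set (L.Term ℕ)) :
    SubstImg τ (SubstImg σ Γ) = SubstImg (fun x => (σ x).subst τ) Γ := by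
  simp only [SubstImg, Set.image_image, Term.subst_subst]

lemma IsAntitheorem.substImg {R : Set (L.Term ℕ) → L.Term ℕ → Prop} {S : Set (L.Term ℕ)}
    (hS : IsAntitheorem R S) (σ : ℕ → L.Term ℕ) : IsAntitheorem R (SubstImg σ S) := by
  intro τ φ
  rw [substImg_substImg]
  exact hS _ φ

lemma IsAntitheorem.deriv_of_subset {V : ConsLogic L} {S Γ : Set (L.Term ℕ)}
    (hS : IsAntitheorem V.deriv S) (hSΓ : S ⊆ Γ) (φ : L.Term ℕ) : V.deriv Γ φ :=
  V.mono _ _ _ hSΓ (by simpa using hS Term.var φ)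

lemma CC.deriv {V : ConsLogic L} {Γ : Set (L.Term ℕ)} {φ : L.Term ℕ} (h : CC V Γ φ) :
    V.deriv Γ φ := by
  rcases h with ⟨hΓφ, -⟩ | ⟨S, hS, hSΓ⟩
  · exact hΓφ
  · exact hS.deriv_of_subset hSΓ φ

theorem statement_9_general (L : FirstOrder.Language.{0, 0})
    (V : ConsLogic L) (Sg : Set (L.Term ℕ)) :
    IsAntitheorem (CC V) Sg ↔ IsAntitheorem V.deriv Sg :=
  ⟨fun h σ φ => (h σ φ).deriv, fun h σ _ => Or.inr ⟨_, h.substImg σ, subset_rfl⟩⟩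

/-- A logic `⊢` and its containment companion `⊢^r` have the same
antitheorems. -/
theorem statement_9 (L : FirstOrder.Language.{0, 0}) [IsEmpty (L.Functions 0)]
    (V : ConsLogic L) (Sg : Set (L.Term ℕ)) :
    IsAntitheorem (CC V) Sg ↔ IsAntitheorem V.deriv Sg :=
  statement_9_general L V Sg
end
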